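/- arXiv:1608.06593 — 6 statements merged into one kernel-verified Lean document; each statement's English description precedes it below -/
import Mathlib

section
/- (Lemma 1) If n is a product of N ≥ 3 pairwise distinct prime numbers (i.e., n is squarefree with at least three prime divisors), then X(n) < 0. -/
/-- Sum of the distinct prime divisors of `n`. -/
def primeSum (n : ℕ) : ℕ := ∑ p ∈ n.primeFactors, p

/-- Sum of the positive divisors of `n` which are not prime (including `1`,
and including `n` itself whenever `n` is not prime). -/
def compositeSum (n : ℕ) : ℕ := ∑ d ∈ n.divisors.filter (fun d => ¬ d.Prime), d

/-- The map `X(n) = Π(n) − C(n) + n`, regarded as an integer. -/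
def X (n : ℕ) : ℤ := (primeSum n : ℤ) - (compositeSum n : ℤ) + n

/-!
Write `n = ∏ P` over its set `P` of prime factors and pick distinct `p, q ∈ P`. The products over
`∅`, `{p, q}`, `P \ {q}` and `P` are four distinct divisors of `n`, none of them prime since each
has a number of prime factors other than one; so `C(n) ≥ 1 + pq + n/q + n`. On the other hand
`Π(n) = q + ∑ (P \ {q}) ≤ pq + n/q`, because a sum of numbers `≥ 2` is at most their product.
-/

open Finset

theorem Finset.sum_le_prod_of_two_le {ι : Type*} (s : Finset ι) (f : ι → ℕ)
    (h : ∀ i ∈ s, 2 ≤ f i) : ∑ i ∈ s, f i ≤ ∏ i ∈ s, f i := by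
  induction s using Finset.cons_induction with
  | empty => simp
  | cons a s _ ih =>
    rw [sum_cons, prod_cons]
    have ih := ih fun i hi ↦ h i (mem_cons_of_mem hi)
    rcases s.eq_empty_or_nonempty with rfl | ⟨b, hb⟩
    · simp
    have hprod : 2 ≤ ∏ i ∈ s, f i :=
      (h b (mem_cons_of_mem hb)).trans <| Nat.le_of_dvd
        (prod_pos fun i hi ↦ two_pos.trans_le (h i (mem_cons_of_mem hi))) (dvd_prod_of_mem f hb)
    calc f a + ∑ i ∈ s, f i ≤ f a + ∏ i ∈ s, f i := by gcongr
      _ ≤ f a * ∏ i ∈ s, f i := add_le_mul (h a (mem_cons_self a s)) hprod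

theorem Nat.not_prime_of_card_primeFactors_ne_one {d : ℕ} (h : d.primeFactors.card ≠ 1) :
    ¬ d.Prime :=
  fun hd ↦ h (by rw [hd.primeFactors, card_singleton])

theorem sum_prod_le_compositeSum {n : ℕ} (hn : n ≠ 0) (𝒮 : Finset (Finset ℕ))
    (hsub : ∀ s ∈ 𝒮, s ⊆ n.primeFactors) (hcard : ∀ s ∈ 𝒮, s.card ≠ 1) :
    ∑ s ∈ 𝒮, ∏ p ∈ s, p ≤ compositeSum n := by
  have hprimeFactors : ∀ s ∈ 𝒮, (∏ p ∈ s, p).primeFactors = s := fun s hs ↦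
    Nat.primeFactors_prod fun p hp ↦ Nat.prime_of_mem_primeFactors (hsub s hs hp)
  have hinj : Set.InjOn (fun s ↦ ∏ p ∈ s, p) 𝒮 := fun s hs t ht hst ↦
    (hprimeFactors s hs).symm.trans ((congrArg Nat.primeFactors hst).trans (hprimeFactors t ht))
  calc ∑ s ∈ 𝒮, ∏ p ∈ s, p = ∑ d ∈ 𝒮.image fun s ↦ ∏ p ∈ s, p, d :=
        (sum_image (f := fun d ↦ d) hinj).symm
    _ ≤ compositeSum n := sum_le_sum_of_subset fun d hd ↦ ?_
  obtain ⟨s, hs, rfl⟩ := mem_image.1 hd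
  refine mem_filter.2 ⟨Nat.mem_divisors.2 ⟨?_, hn⟩, ?_⟩
  · exact (prod_dvd_prod_of_subset _ _ _ (hsub s hs)).trans n.prod_primeFactors_dvd
  · exact Nat.not_prime_of_card_primeFactors_ne_one (by rw [hprimeFactors s hs]; exact hcard s hs)

theorem primeSum_le_mul_add_prod_erase {n p q : ℕ} (hq : q ∈ n.primeFactors)
    (hp : p ∈ n.primeFactors.erase q) :
    primeSum n ≤ p * q + ∏ r ∈ n.primeFactors.erase q, r := by
  rw [primeSum, ← add_sum_erase _ (fun r ↦ r) hq]
  refine add_le_add ?_ (sum_le_prod_of_two_le _ _ fun r hr ↦ ?_)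
  · exact Nat.le_mul_of_pos_left q (Nat.pos_of_mem_primeFactors (mem_of_mem_erase hp))
  · exact (Nat.prime_of_mem_primeFactors (mem_of_mem_erase hr)).two_le

theorem one_add_mul_add_prod_erase_add_le_compositeSum {n p q : ℕ} (hsf : Squarefree n)
    (h3 : 3 ≤ n.primeFactors.card) (hq : q ∈ n.primeFactors)
    (hp : p ∈ n.primeFactors.erase q) :
    1 + p * q + ∏ r ∈ n.primeFactors.erase q, r + n ≤ compositeSum n := by
  set P := n.primeFactors
  have hpq : p ≠ q := ne_of_mem_erase hp
  have hcard_erase : (P.erase q).card = P.card - 1 := card_erase_of_mem hq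
  have hcard_pair : ({p, q} : Finset ℕ).card = 2 := card_pair hpq
  have hpair_ne : ({p, q} : Finset ℕ) ≠ P.erase q := fun h ↦
    notMem_erase q P (h ▸ mem_insert_of_mem (mem_singleton_self q))
  have hsum : ∑ s ∈ ({∅, {p, q}, P.erase q, P} : Finset (Finset ℕ)), ∏ r ∈ s, r
      = 1 + p * q + ∏ r ∈ P.erase q, r + n := by
    rw [sum_insert, sum_insert, sum_insert, sum_singleton, prod_empty, prod_pair hpq,
      Nat.prod_primeFactors_of_squarefree hsf, add_assoc, add_assoc]
    · exact notMem_singleton.2 (erase_ssubset hq).ne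
    · simp only [mem_insert, mem_singleton, not_or]
      exact ⟨hpair_ne, mt (congrArg card) (by omega)⟩
    · simp only [mem_insert, mem_singleton, not_or]
      refine ⟨?_, ?_, ?_⟩ <;> exact mt (congrArg card) (by simp; omega)
  rw [← hsum]
  refine sum_prod_le_compositeSum hsf.ne_zero _ ?_ ?_ <;>
    simp only [mem_insert, mem_singleton, forall_eq_or_imp, forall_eq]
  · exact ⟨empty_subset P, insert_subset (mem_of_mem_erase hp) (singleton_subset_iff.2 hq),
      erase_subset q P, subset_refl P⟩
  · exact ⟨by simp, by omega, by omega, by omega⟩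

theorem X_neg_of_squarefree_three_primeFactors (n : ℕ) (hsf : Squarefree n)
    (h3 : 3 ≤ n.primeFactors.card) : X n < 0 := by
  obtain ⟨q, hq⟩ := card_pos.1 (by omega : 0 < n.primeFactors.card)
  obtain ⟨p, hp⟩ := card_pos.1 (by rw [card_erase_of_mem hq]; omega :
    0 < (n.primeFactors.erase q).card)
  have hprimeSum := primeSum_le_mul_add_prod_erase hq hp
  have hcompositeSum := one_add_mul_add_prod_erase_add_le_compositeSum hsf h3 hq hp
  rw [X]
  omega
end

section
/- (Lemma 2) If n = pᵃ·q where p and q are distinct prime numbers and a ≥ 2, then X(n) < 0. -/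
open Finset ArithmeticFunction
open scoped ArithmeticFunction.sigma

theorem compositeSum_add_primeSum (n : ℕ) : compositeSum n + primeSum n = σ 1 n := by
  have hprime : n.divisors.filter Nat.Prime = n.primeFactors := by
    ext d
    simp only [mem_filter, Nat.mem_divisors, Nat.mem_primeFactors]
    tauto
  rw [compositeSum, primeSum, ← hprime, add_comm, sum_filter_add_sum_filter_not, sigma_one_apply]

theorem X_neg_iff (n : ℕ) : X n < 0 ↔ 2 * primeSum n + n < σ 1 n := by
  rw [X, ← compositeSum_add_primeSum]
  omega

theorem primeSum_prime_pow_mul_prime {p q a : ℕ} (hp : p.Prime) (hq : q.Prime) (hpq : p ≠ q)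
    (ha : a ≠ 0) : primeSum (p ^ a * q) = p + q := by
  rw [primeSum, Nat.primeFactors_mul (pow_ne_zero _ hp.ne_zero) hq.ne_zero,
    Nat.primeFactors_pow _ ha, hp.primeFactors, hq.primeFactors, ← insert_eq, sum_pair hpq]

theorem sigma_one_mul_prime {m q : ℕ} (hq : q.Prime) (hmq : m.Coprime q) :
    σ 1 (m * q) = σ 1 m * (q + 1) := by
  rw [isMultiplicative_sigma.map_mul_of_coprime hmq, sigma_one_apply q, hq.sum_divisors]

theorem one_add_le_sum_range_pow (p : ℕ) {a : ℕ} (ha : 2 ≤ a) :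
    1 + p ≤ ∑ i ∈ range a, p ^ i :=
  calc 1 + p = ∑ i ∈ range 2, p ^ i := by simp [sum_range_succ]
    _ ≤ ∑ i ∈ range a, p ^ i := sum_le_sum_of_subset (range_subset_range.mpr ha)

theorem X_neg_of_prime_pow_mul_prime (p q a : ℕ) (hp : p.Prime) (hq : q.Prime)
    (hpq : p ≠ q) (ha : 2 ≤ a) : X (p ^ a * q) < 0 := by
  have hcop : (p ^ a).Coprime q := ((Nat.coprime_primes hp hq).mpr hpq).pow_left a
  rw [X_neg_iff, primeSum_prime_pow_mul_prime hp hq hpq (by omega), sigma_one_mul_prime hq hcop,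
    sigma_one_apply_prime_pow hp, sum_range_succ]
  have hS := one_add_le_sum_range_pow p ha
  have hpa : p ^ 2 ≤ p ^ a := Nat.pow_le_pow_right hp.pos ha
  have hp2 := hp.two_le
  have hq2 := hq.two_le
  nlinarith
end

section
/- (Lemma 3) Let n be a positive integer with X(n) ≤ 0 and let p be a prime number dividing n. Then X(p·n) < 0. -/
open Finset

lemma primeSum_add_compositeSum (n : ℕ) :
    primeSum n + compositeSum n = ∑ d ∈ n.divisors, d := by
  rw [primeSum, compositeSum, Nat.primeFactors_eq_to_filter_divisors_prime]
  exact sum_filter_add_sum_filter_not _ _ _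

lemma X_eq_two_mul_primeSum_sub_sum_divisors_add_self (n : ℕ) :
    X n = 2 * primeSum n - ∑ d ∈ n.divisors, (d : ℤ) + n := by
  have h := primeSum_add_compositeSum n
  rw [X]
  zify at h
  linarith

lemma primeSum_prime_mul_of_dvd {p n : ℕ} (hp : p.Prime) (hdvd : p ∣ n) :
    primeSum (p * n) = primeSum n := by
  rcases eq_or_ne n 0 with rfl | hn
  · rfl
  rw [primeSum, primeSum, Nat.primeFactors_mul hp.ne_zero hn, hp.primeFactors,
    union_eq_right.mpr (singleton_subset_iff.mpr (hp.mem_primeFactors hdvd hn))]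

lemma sum_divisors_add_le_sum_divisors_of_dvd {d m : ℕ} (hm : m ≠ 0) (hdvd : d ∣ m)
    (hne : d ≠ m) : ∑ i ∈ d.divisors, i + m ≤ ∑ i ∈ m.divisors, i := by
  rw [Nat.sum_divisors_eq_sum_properDivisors_add_self (n := m)]
  gcongr
  exact Nat.divisors_subset_properDivisors hm hdvd hne

theorem X_neg_of_mul_prime_dvd (n p : ℕ) (hn : 0 < n) (hXn : X n ≤ 0)
    (hp : p.Prime) (hdvd : p ∣ n) : X (p * n) < 0 := by
  have hpn : p * n ≠ 0 := mul_ne_zero hp.ne_zero hn.ne'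
  have hσ : ∑ i ∈ n.divisors, i + p * n ≤ ∑ i ∈ (p * n).divisors, i :=
    sum_divisors_add_le_sum_divisors_of_dvd hpn (dvd_mul_left n p)
      (by nlinarith [hp.two_le])
  rw [X_eq_two_mul_primeSum_sub_sum_divisors_add_self] at hXn ⊢
  rw [primeSum_prime_mul_of_dvd hp hdvd]
  have hn' : (0 : ℤ) < n := by exact_mod_cast hn
  push_cast at hσ ⊢
  linarith
end

section
/- If a positive integer n is a product of three or more primes counted with multiplicity (i.e., Ω(n) ≥ 3, where Ω denotes the number of prime factors with multiplicity), then X(n) < 0. -/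
/-!
For each prime `p ∣ n` the cofactor `n / p` has at least two prime factors, so `1`, `n` and the
`n / p` are distinct non-prime divisors of `n`, whence `C(n) > n + ∑_p n / p`. It remains to see
`∑_p p ≤ ∑_p n / p`. With `P` the largest prime factor, every `n / p` with `p ≠ P` is a composite
multiple of `P`, hence at least `2P ≥ p + P`, which pays for `P` as well; if `P` is the only
prime factor, then `n = P ^ k` with `k ≥ 3` and `P ≤ n / P` directly.
-/

open ArithmeticFunction Finset
open scoped ArithmeticFunction.Omega

namespace Nat

lemma cardFactors_div_add_one {n p : ℕ} (hp : p.Prime) (hpn : p ∣ n) (hn : n ≠ 0) :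
    Ω (n / p) + 1 = Ω n := by
  obtain ⟨m, rfl⟩ := hpn
  rw [Nat.mul_div_cancel_left m hp.pos, cardFactors_mul hp.ne_zero (right_ne_zero_of_mul hn),
    cardFactors_apply_prime hp, add_comm]

lemma one_lt_of_two_le_cardFactors {m : ℕ} (h : 2 ≤ Ω m) : 1 < m :=
  cardFactors_pos_iff_one_lt.mp (by omega)

lemma not_prime_of_two_le_cardFactors {m : ℕ} (h : 2 ≤ Ω m) : ¬ m.Prime := fun hm => by
  rw [cardFactors_apply_prime hm] at h
  omega

lemma Prime.two_mul_le_of_dvd_of_not_prime {P m : ℕ} (hP : P.Prime) (hPm : P ∣ m) (hm0 : m ≠ 0)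
    (hm : ¬ m.Prime) : 2 * P ≤ m := by
  obtain ⟨k, rfl⟩ := hPm
  have hk0 : k ≠ 0 := right_ne_zero_of_mul hm0
  have hk1 : k ≠ 1 := by rintro rfl; simp [hP] at hm
  rw [mul_comm 2]
  exact Nat.mul_le_mul_left P (show 2 ≤ k by omega)

lemma two_le_cardFactors_div {n p : ℕ} (hn : 3 ≤ Ω n) (hp : p ∈ n.primeFactors) :
    2 ≤ Ω (n / p) := by
  have := cardFactors_div_add_one (prime_of_mem_primeFactors hp) (dvd_of_mem_primeFactors hp)
    (mem_primeFactors.mp hp).2.2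
  omega

lemma sum_primeFactors_le_sum_div {n : ℕ} (hn : 3 ≤ Ω n) :
    ∑ p ∈ n.primeFactors, p ≤ ∑ p ∈ n.primeFactors, n / p := by
  have hn1 : 1 < n := one_lt_of_two_le_cardFactors (by omega)
  have hne : n.primeFactors.Nonempty := nonempty_primeFactors.mpr hn1
  set P := n.primeFactors.max' hne
  have hPmem : P ∈ n.primeFactors := max'_mem _ hne
  have hP : P.Prime := prime_of_mem_primeFactors hPmem
  rcases (n.primeFactors.erase P).eq_empty_or_nonempty with hsingle | ⟨q, hq⟩
  · have hfac : n.primeFactors = {P} := by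
      rw [← insert_erase hPmem, hsingle, insert_empty]
    obtain ⟨r, hr⟩ := nonempty_primeFactors.mpr
      (one_lt_of_two_le_cardFactors (two_le_cardFactors_div hn hPmem))
    have hrP : r = P := by
      simpa [hfac] using primeFactors_mono (div_dvd_of_dvd (dvd_of_mem_primeFactors hPmem))
        (by omega) hr
    subst hrP
    simpa [hfac] using le_of_mem_primeFactors hr
  · have hcofactor : ∀ p ∈ n.primeFactors.erase P, p + P ≤ n / p := by
      intro p hp
      obtain ⟨hpP, hpmem⟩ := mem_erase.mp hp
      have hPdvd : P ∣ n / p := by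
        have hcop : Coprime P p :=
          (coprime_primes hP (prime_of_mem_primeFactors hpmem)).mpr (Ne.symm hpP)
        rw [← hcop.dvd_mul_left, Nat.mul_div_cancel' (dvd_of_mem_primeFactors hpmem)]
        exact dvd_of_mem_primeFactors hPmem
      have h2 := two_le_cardFactors_div hn hpmem
      have := hP.two_mul_le_of_dvd_of_not_prime hPdvd
        (one_lt_of_two_le_cardFactors h2).ne_bot (not_prime_of_two_le_cardFactors h2)
      have := le_max' _ p hpmem
      omega
    have hcard : 0 < #(n.primeFactors.erase P) := Finset.card_pos.mpr ⟨q, hq⟩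
    calc ∑ p ∈ n.primeFactors, p = P + ∑ p ∈ n.primeFactors.erase P, p :=
          (add_sum_erase _ _ hPmem).symm
      _ ≤ ∑ p ∈ n.primeFactors.erase P, (p + P) := by
          rw [sum_add_distrib, sum_const, smul_eq_mul]
          nlinarith
      _ ≤ ∑ p ∈ n.primeFactors.erase P, n / p := sum_le_sum hcofactor
      _ ≤ ∑ p ∈ n.primeFactors, n / p := sum_le_sum_of_subset (erase_subset _ _)

end Nat

open Nat in
lemma add_sum_div_primeFactors_lt_compositeSum {n : ℕ} (hn : 3 ≤ Ω n) :
    n + ∑ p ∈ n.primeFactors, n / p < compositeSum n := by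
  have hn1 : 1 < n := one_lt_of_two_le_cardFactors (by omega)
  set S := n.primeFactors.image (n / ·)
  have hS : ∑ d ∈ S, d = ∑ p ∈ n.primeFactors, n / p :=
    sum_image fun p hp q hq h => by
      rw [← Nat.div_div_self (dvd_of_mem_primeFactors hp) (by omega), h,
        Nat.div_div_self (dvd_of_mem_primeFactors hq) (by omega)]
  have hcofactor : ∀ d ∈ S, 1 < d ∧ d < n ∧ d ∣ n ∧ ¬ d.Prime := by
    simp only [S, mem_image]
    rintro _ ⟨p, hp, rfl⟩
    have h2 := two_le_cardFactors_div hn hp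
    exact ⟨one_lt_of_two_le_cardFactors h2,
      div_lt_self (by omega) (prime_of_mem_primeFactors hp).one_lt,
      div_dvd_of_dvd (dvd_of_mem_primeFactors hp), not_prime_of_two_le_cardFactors h2⟩
  have h1 : 1 ∉ insert n S := by
    simp only [mem_insert, not_or]
    exact ⟨by omega, fun h => (hcofactor 1 h).1.false⟩
  have hnS : n ∉ S := fun h => (hcofactor n h).2.1.false
  have hsub : insert 1 (insert n S) ⊆ n.divisors.filter (fun d => ¬ d.Prime) := by
    intro d hd
    simp only [mem_insert, mem_filter, mem_divisors] at hd ⊢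
    rcases hd with rfl | rfl | hd
    · exact ⟨⟨one_dvd n, by omega⟩, not_prime_one⟩
    · exact ⟨⟨dvd_rfl, by omega⟩, not_prime_of_two_le_cardFactors (by omega)⟩
    · exact ⟨⟨(hcofactor d hd).2.2.1, by omega⟩, (hcofactor d hd).2.2.2⟩
  calc n + ∑ p ∈ n.primeFactors, n / p < 1 + (n + ∑ d ∈ S, d) := by omega
    _ = ∑ d ∈ insert 1 (insert n S), d := by rw [sum_insert h1, sum_insert hnS]
    _ ≤ compositeSum n := sum_le_sum_of_subset hsub

theorem X_neg_of_three_le_bigOmega_general (n : ℕ)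
    (h : 3 ≤ (Nat.primeFactorsList n).length) : X n < 0 := by
  rw [← cardFactors_apply] at h
  have hprimes := Nat.sum_primeFactors_le_sum_div h
  have hcomposites := add_sum_div_primeFactors_lt_compositeSum h
  unfold X primeSum
  omega

theorem X_neg_of_three_le_bigOmega (n : ℕ) (hn : 0 < n)
    (h : 3 ≤ (Nat.primeFactorsList n).length) : X n < 0 :=
  X_neg_of_three_le_bigOmega_general n h
end

section
/- For a positive integer n, X(n) = 2 if and only if n = 9. -/
/-!
For composite `n = p * m` with `p` the least prime factor of `n`, the non-prime divisors `1` and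
`n` give `X n ≤ Π(n) - 1`, with equality when `m` is prime; then `Π(n) = 3` forces `p = m = 3`.
When `m` is composite it is a further non-prime divisor, and
`Π(n) ≤ p + Π(m) ≤ minFac m + Π(m) ≤ m + 2` gives `X n ≤ 1`.
Primes are excluded by parity, as `X p = 2p - 1`.
-/

theorem Nat.exists_eq_minFac_mul_of_not_prime {n : ℕ} (hn : 2 ≤ n) (hn_prime : ¬ n.Prime) :
    ∃ m, 2 ≤ m ∧ n = n.minFac * m := by
  obtain ⟨m, hnm⟩ := Nat.minFac_dvd n
  refine ⟨m, ?_, hnm⟩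
  obtain rfl | rfl | hm : m = 0 ∨ m = 1 ∨ 2 ≤ m := by omega
  · omega
  · exact absurd (by rw [hnm, mul_one]; exact Nat.minFac_prime (by omega)) hn_prime
  · exact hm

theorem primeSum_mul_le (a b : ℕ) : primeSum (a * b) ≤ primeSum a + primeSum b := by
  have := Nat.sum_primeFactors_gcd_add_sum_primeFactors_mul a b (fun p => p)
  simp only [primeSum]
  omega

theorem primeSum_prime {p : ℕ} (hp : p.Prime) : primeSum p = p := by
  simp [primeSum, hp.primeFactors]

theorem primeSum_le_self (n : ℕ) : primeSum n ≤ n := by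
  induction n using Nat.recOnMul with
  | zero => simp [primeSum]
  | one => simp [primeSum]
  | prime p hp => exact (primeSum_prime hp).le
  | mul a b ha hb =>
    obtain rfl | rfl | ha2 : a = 0 ∨ a = 1 ∨ 2 ≤ a := by omega
    · simp [primeSum]
    · simpa using hb
    obtain rfl | rfl | hb2 : b = 0 ∨ b = 1 ∨ 2 ≤ b := by omega
    · simp [primeSum]
    · simpa using ha
    calc primeSum (a * b) ≤ primeSum a + primeSum b := primeSum_mul_le a b
      _ ≤ a + b := Nat.add_le_add ha hb
      _ ≤ a * b := by nlinarith

theorem minFac_add_primeSum_le {m : ℕ} (hm : 2 ≤ m) (hm_prime : ¬ m.Prime) :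
    m.minFac + primeSum m ≤ m + 2 := by
  have ha : m.minFac.Prime := Nat.minFac_prime (by omega)
  obtain ⟨b, hb, hab⟩ := Nat.exists_eq_minFac_mul_of_not_prime hm hm_prime
  have hsum : primeSum m ≤ m.minFac + b := by
    have := primeSum_mul_le m.minFac b
    rw [← hab, primeSum_prime ha] at this
    have := primeSum_le_self b
    omega
  have := ha.two_le
  calc m.minFac + primeSum m ≤ m.minFac + (m.minFac + b) := by omega
    _ ≤ m.minFac * b + 2 := by nlinarith
    _ = m + 2 := by rw [← hab]

theorem primeSum_mul_eq_three {p q : ℕ} (hp : p.Prime) (hq : q.Prime)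
    (h : primeSum (p * q) = 3) : p = 3 ∧ q = 3 := by
  rw [primeSum, Nat.primeFactors_mul hp.ne_zero hq.ne_zero, hp.primeFactors,
    hq.primeFactors] at h
  have := hp.two_le
  have := hq.two_le
  by_cases hpq : p = q
  · subst hpq
    simp_all
  · rw [Finset.singleton_union, Finset.sum_pair hpq] at h
    omega

theorem sum_le_compositeSum {n : ℕ} {s : Finset ℕ} (hs : s ⊆ n.divisors)
    (hs_prime : ∀ d ∈ s, ¬ d.Prime) : ∑ d ∈ s, d ≤ compositeSum n :=
  Finset.sum_le_sum_of_subset fun d hd => Finset.mem_filter.2 ⟨hs hd, hs_prime d hd⟩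

theorem compositeSum_prime {p : ℕ} (hp : p.Prime) : compositeSum p = 1 := by
  simp [compositeSum, hp.divisors, Finset.filter_insert, Finset.filter_singleton, hp,
    Nat.not_prime_one]

theorem compositeSum_prime_mul_prime {p q : ℕ} (hp : p.Prime) (hq : q.Prime) :
    compositeSum (p * q) = 1 + p * q := by
  have hpq : 1 < p * q := Nat.one_lt_mul_iff.2 ⟨hp.pos, hq.pos, Or.inl hp.one_lt⟩
  suffices (p * q).divisors.filter (fun d => ¬ d.Prime) = {1, p * q} by
    rw [compositeSum, this, Finset.sum_pair hpq.ne]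
  ext d
  simp only [Finset.mem_filter, Nat.mem_divisors, Finset.mem_insert, Finset.mem_singleton]
  constructor
  · rintro ⟨⟨hd, -⟩, hd_prime⟩
    obtain ⟨d₁, d₂, hd₁, hd₂, rfl⟩ := Nat.dvd_mul.1 hd
    rcases (Nat.dvd_prime hp).1 hd₁ with rfl | rfl <;>
      rcases (Nat.dvd_prime hq).1 hd₂ with rfl | rfl <;> simp_all
  · rintro (rfl | rfl)
    · exact ⟨⟨one_dvd _, by omega⟩, Nat.not_prime_one⟩
    · exact ⟨⟨dvd_rfl, by omega⟩,
        Nat.not_prime_mul hp.ne_one hq.ne_one⟩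

theorem X_prime {p : ℕ} (hp : p.Prime) : X p = 2 * p - 1 := by
  rw [X, primeSum_prime hp, compositeSum_prime hp]
  ring

theorem X_prime_mul_prime {p q : ℕ} (hp : p.Prime) (hq : q.Prime) :
    X (p * q) = primeSum (p * q) - 1 := by
  rw [X, compositeSum_prime_mul_prime hp hq]
  push_cast
  ring

theorem X_le_of_dvd {n d : ℕ} (hd : d ∣ n) (hd1 : 1 < d) (hdn : d < n) (hd_prime : ¬ d.Prime) :
    X n ≤ primeSum n - 1 - d := by
  have hn : n ≠ 0 := by omega
  have hn_prime : ¬ n.Prime := fun h => by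
    rcases (Nat.dvd_prime h).1 hd with rfl | rfl <;> omega
  have hsum := sum_le_compositeSum (n := n) (s := {1, d, n})
    (by simp [Finset.insert_subset_iff, hd, hn])
    (by simp [Nat.not_prime_one, hd_prime, hn_prime])
  rw [Finset.sum_insert (by simp; omega), Finset.sum_pair (by omega)] at hsum
  zify at hsum
  rw [X]
  linarith

theorem X_mul_le_one {p m : ℕ} (hp : p.Prime) (hpm : p ≤ m.minFac) (hm : 2 ≤ m)
    (hm_prime : ¬ m.Prime) : X (p * m) ≤ 1 := by
  have hp2 := hp.two_le
  have hX := X_le_of_dvd (dvd_mul_left m p) (by omega) (by nlinarith) hm_prime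
  have hsum : primeSum (p * m) ≤ m + 2 := by
    calc primeSum (p * m) ≤ p + primeSum m := by
          simpa only [primeSum_prime hp] using primeSum_mul_le p m
      _ ≤ m + 2 := by have := minFac_add_primeSum_le hm hm_prime; omega
  zify at hsum
  linarith

theorem X_nine : X 9 = 2 := by
  rw [X, primeSum, compositeSum, Nat.primeFactors_eq_to_filter_divisors_prime]
  decide

theorem X_eq_two_iff_general (n : ℕ) : X n = 2 ↔ n = 9 := by
  refine ⟨fun h => ?_, fun h => h ▸ X_nine⟩
  rcases Nat.lt_or_ge n 2 with hn | hn
  · interval_cases n <;>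
      simp [X, primeSum, compositeSum, Finset.filter_singleton, Nat.not_prime_one] at h
  by_cases hn_prime : n.Prime
  · rw [X_prime hn_prime] at h
    omega
  have hp : n.minFac.Prime := Nat.minFac_prime (by omega)
  obtain ⟨m, hm, hnm⟩ := Nat.exists_eq_minFac_mul_of_not_prime hn hn_prime
  by_cases hm_prime : m.Prime
  · rw [hnm, X_prime_mul_prime hp hm_prime] at h
    obtain ⟨hp3, rfl⟩ := primeSum_mul_eq_three hp hm_prime (by omega)
    rw [hnm, hp3]
  · have hpm : n.minFac ≤ m.minFac :=
      Nat.minFac_le_of_dvd (Nat.minFac_prime (by omega)).two_le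
        (hnm ▸ dvd_mul_of_dvd_right (Nat.minFac_dvd m) _)
    have := X_mul_le_one hp hpm hm hm_prime
    rw [← hnm] at this
    omega

theorem X_eq_two_iff (n : ℕ) (hn : 0 < n) : X n = 2 ↔ n = 9 :=
  X_eq_two_iff_general n
end

section
/- There is no prime p such that every iterate of the map f(m) = 2m − 1 starting from p is prime: for every prime p there exists i ≥ 1 such that f^{(i)}(p) is not prime. Consequently, there are no infinite 'prime only' sequences generated by X. -/
/-!
The map `m ↦ 2m - 1` doubles `m - 1`, so its `i`-th iterate at `p` is `2^i (p - 1) + 1`.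
For an odd prime `p`, Fermat's little theorem gives `2^(p-1) (p - 1) + 1 ≡ 1 · (-1) + 1 ≡ 0
(mod p)`, so the `(p-1)`-st iterate is a proper multiple of `p`. For `p = 2` the iterates are
`2^i + 1`, and `2^3 + 1 = 9`.
-/

theorem iterate_two_mul_sub_one {n : ℕ} (hn : 1 ≤ n) (i : ℕ) :
    (fun m => 2 * m - 1)^[i] n = 2 ^ i * (n - 1) + 1 := by
  induction i with
  | zero => simp; omega
  | succ i ih =>
    rw [Function.iterate_succ_apply', ih, pow_succ]
    ring_nf
    omega

theorem Nat.Prime.dvd_pow_sub_one_mul_sub_one_add_one {p a : ℕ} (hp : p.Prime) (ha : ¬ p ∣ a) :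
    p ∣ a ^ (p - 1) * (p - 1) + 1 := by
  have : Fact p.Prime := ⟨hp⟩
  have hfermat : (a : ZMod p) ^ (p - 1) = 1 :=
    ZMod.pow_card_sub_one_eq_one (by rwa [Ne, ZMod.natCast_eq_zero_iff])
  rw [← ZMod.natCast_eq_zero_iff]
  push_cast [Nat.cast_sub hp.one_le]
  rw [hfermat, ZMod.natCast_self]
  ring

theorem no_infinite_prime_chain (p : ℕ) (hp : p.Prime) :
    ∃ i : ℕ, 1 ≤ i ∧ ¬ ((fun m => 2 * m - 1)^[i] p).Prime := by
  rcases hp.eq_two_or_odd' with rfl | hodd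
  · refine ⟨3, by norm_num, ?_⟩
    rw [iterate_two_mul_sub_one (n := 2) (by norm_num)]
    norm_num
  have hp3 : 3 ≤ p := by
    obtain ⟨k, rfl⟩ := hodd
    have := hp.two_le
    omega
  refine ⟨p - 1, by omega, ?_⟩
  rw [iterate_two_mul_sub_one hp.one_le]
  have hdvd : p ∣ 2 ^ (p - 1) * (p - 1) + 1 :=
    hp.dvd_pow_sub_one_mul_sub_one_add_one
      ((Nat.prime_dvd_prime_iff_eq hp Nat.prime_two).not.mpr (by omega))
  have hlt : p < 2 ^ (p - 1) * (p - 1) + 1 := by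
    have : 2 * (p - 1) ≤ 2 ^ (p - 1) * (p - 1) :=
      Nat.mul_le_mul_right _ (Nat.le_self_pow (by omega) 2)
    omega
  exact Nat.not_prime_of_dvd_of_lt hdvd hp.two_le hlt
end
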